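/- arXiv:2012.04942 — 6 statements merged into one kernel-verified Lean document; each statement's English description precedes it below -/
import Mathlib

section
/- Let f ∈ Γ₀(X) and suppose x ∈ X is a (global) minimizer of f. Then for every M ≥ 0 one has ∂f(x) = ⋂_{ε>0} co‾( ∂_ε f(x) ∪ ε·∂_{ε+M} f(x) ) = ⋂_{ε>0} co‾( ∂_ε f(x) ∪ ε·∂_{ε+M} f⁺(x) ), where ε·S := {ε s : s ∈ S} and f⁺ := max{f, 0}. -/
open Set Pointwise Topology
open scoped Classical

noncomputable section

variable {X : Type*} [AddCommGroup X] [Module ℝ X] [TopologicalSpace X]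
  [IsTopologicalAddGroup X] [ContinuousSMul ℝ X] [LocallyConvexSpace ℝ X] [T2Space X]

/-- Convexity for extended-real-valued functions. -/
def EConvexOn' (f : X → EReal) : Prop :=
  ∀ x y : X, ∀ a b : ℝ, 0 ≤ a → 0 ≤ b → a + b = 1 →
    f (a • x + b • y) ≤ (a : EReal) * f x + (b : EReal) * f y

/-- `f ∈ Γ₀(X)`: proper, convex and lower semicontinuous. -/
def Gamma0 (f : X → EReal) : Prop :=
  (∀ x, f x ≠ ⊥) ∧ (∃ x, f x ≠ ⊤) ∧ EConvexOn' f ∧ LowerSemicontinuous f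

/-- Effective domain of `f`. -/
def edom (f : X → EReal) : Set X := {x | f x ≠ ⊤}

/-- The ε-subdifferential of `f` at `x` (a subset of the weak* dual);
it is empty when `ε < 0` or `f x ∉ ℝ`. -/
def esubdiff (f : X → EReal) (x : X) (ε : ℝ) : Set (WeakDual ℝ X) :=
  {p | 0 ≤ ε ∧ f x ≠ ⊤ ∧ f x ≠ ⊥ ∧
    ∀ y : X, f x + ((p y - p x - ε : ℝ) : EReal) ≤ f y}

/-- Normal cone to `A` at `x` (empty when `x ∉ A`). -/
def normalCone (A : Set X) (x : X) : Set (WeakDual ℝ X) :=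
  {p | x ∈ A ∧ ∀ y ∈ A, p y - p x ≤ 0}

/-- Recession cone of a set. -/
def recCone {V : Type*} [AddCommMonoid V] [Module ℝ V] (C : Set V) : Set V :=
  {y | ∃ c ∈ C, ∀ l : ℝ, 0 ≤ l → c + l • y ∈ C}

/-- Closed convex hull of a set. -/
def cclo {V : Type*} [AddCommMonoid V] [Module ℝ V] [TopologicalSpace V] (S : Set V) : Set V :=
  closure (convexHull ℝ S)

/-- `sMul l f` is the function `l·f`, with the convention `0·f = I_{dom f}`
(i.e. `(l·f) z = +∞` whenever `f z = +∞`). -/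
def sMul (l : ℝ) (f : X → EReal) : X → EReal :=
  fun z => if f z = ⊤ then ⊤ else (l : EReal) * f z

/-! Every `∂_δ f(x)` is weak*-closed and convex, and `∂f(x) = ⋂_{δ>0} ∂_δ f(x)`. Given `δ > 0`,
choose `0 < ε ≤ 1` with `ε ≤ δ` and `ε(ε+M) ≤ δ`. Since `x` minimizes `f`, scaling an
`η`-subgradient by `ε ∈ [0,1]` gives an `εη`-subgradient (`f x + ε t ≤ max (f x) (f x + t)`), so
`∂_ε f(x) ∪ ε·∂_{ε+M} f(x) ⊆ ∂_δ f(x)`, and so is its closed convex hull. For `f⁺` it suffices that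
`∂_η f⁺(x) ⊆ ∂_η f(x)`, which holds because `t ↦ max t 0` is monotone and `1`-Lipschitz and
`f y ≥ f x`. -/

section ESubdiff

variable {E : Type*} [AddCommGroup E] [Module ℝ E] [TopologicalSpace E] {f : E → EReal} {x : E}

theorem esubdiff_mono {ε δ : ℝ} (h : ε ≤ δ) : esubdiff f x ε ⊆ esubdiff f x δ := by
  rintro p ⟨hε, htop, hbot, hp⟩
  refine ⟨hε.trans h, htop, hbot, fun y => le_trans ?_ (hp y)⟩
  gcongr

theorem esubdiff_eq_iInter_preimage {a : ℝ} (ha : f x = a) {ε : ℝ} (hε : 0 ≤ ε) :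
    esubdiff f x ε =
      ⋂ y, (fun p : WeakDual ℝ E => p y - p x) ⁻¹' {s : ℝ | ((a + (s - ε) : ℝ) : EReal) ≤ f y} := by
  ext p
  simp [esubdiff, ha, hε]

theorem esubdiff_eq_empty {ε : ℝ} (h : ¬ (0 ≤ ε ∧ ∃ a : ℝ, f x = a)) : esubdiff f x ε = ∅ := by
  refine eq_empty_of_forall_notMem fun p ⟨hε, htop, hbot, _⟩ => h ⟨hε, ?_⟩
  exact ⟨(f x).toReal, (EReal.coe_toReal htop hbot).symm⟩

theorem isClosed_esubdiff (f : E → EReal) (x : E) (ε : ℝ) : IsClosed (esubdiff f x ε) := by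
  by_cases h : 0 ≤ ε ∧ ∃ a : ℝ, f x = a
  · obtain ⟨hε, a, ha⟩ := h
    rw [esubdiff_eq_iInter_preimage ha hε]
    refine isClosed_iInter fun y => IsClosed.preimage ?_ ?_
    · exact (WeakDual.eval_continuous y).sub (WeakDual.eval_continuous x)
    · exact isClosed_le (continuous_coe_real_ereal.comp (by fun_prop)) continuous_const
  · rw [esubdiff_eq_empty h]
    exact isClosed_empty

theorem convex_esubdiff (f : E → EReal) (x : E) (ε : ℝ) : Convex ℝ (esubdiff f x ε) := by
  by_cases h : 0 ≤ ε ∧ ∃ a : ℝ, f x = a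
  · obtain ⟨hε, a, ha⟩ := h
    rw [esubdiff_eq_iInter_preimage ha hε]
    refine convex_iInter fun y => Convex.is_linear_preimage ?_ ?_
    · refine (isLowerSet_Iic (f y)).preimage (f := fun s : ℝ => ((a + (s - ε) : ℝ) : EReal))
        ?_ |>.ordConnected.convex
      exact fun s t hst => EReal.coe_le_coe_iff.2 (by linarith)
    · refine ⟨fun p q => ?_, fun c p => ?_⟩
      · change p y + q y - (p x + q x) = (p y - p x) + (q y - q x)
        ring
      · change c * p y - c * p x = c * (p y - p x)
        ring
  · rw [esubdiff_eq_empty h]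
    exact convex_empty

theorem mem_esubdiff_zero_of_forall_pos {p : WeakDual ℝ E}
    (hp : ∀ δ > 0, p ∈ esubdiff f x δ) : p ∈ esubdiff f x 0 := by
  obtain ⟨-, htop, hbot, -⟩ := hp 1 one_pos
  obtain ⟨a, ha⟩ : ∃ a : ℝ, f x = a := ⟨(f x).toReal, (EReal.coe_toReal htop hbot).symm⟩
  refine ⟨le_rfl, htop, hbot, fun y => ?_⟩
  have hlim : Filter.Tendsto (fun δ : ℝ => f x + ((p y - p x - δ : ℝ) : EReal)) (𝓝[>] 0)
      (𝓝 (f x + ((p y - p x - 0 : ℝ) : EReal))) := by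
    simp only [ha, ← EReal.coe_add]
    exact (continuous_coe_real_ereal.comp (by fun_prop)).continuousAt.tendsto.mono_left
      nhdsWithin_le_nhds
  exact le_of_tendsto hlim (eventually_nhdsWithin_of_forall fun δ hδ => (hp δ hδ).2.2.2 y)

theorem smul_esubdiff_subset_of_isMin (hmin : ∀ y, f x ≤ f y) {ε η : ℝ} (hε₀ : 0 ≤ ε)
    (hε₁ : ε ≤ 1) : ε • esubdiff f x η ⊆ esubdiff f x (ε * η) := by
  rintro _ ⟨q, ⟨hη, htop, hbot, hq⟩, rfl⟩
  obtain ⟨a, ha⟩ : ∃ a : ℝ, f x = a := ⟨(f x).toReal, (EReal.coe_toReal htop hbot).symm⟩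
  refine ⟨mul_nonneg hε₀ hη, htop, hbot, fun y => ?_⟩
  set t := q y - q x - η
  have hcomb : a + ε * t ≤ max a (a + t) := by
    rcases le_total 0 t with ht | ht
    · exact le_max_of_le_right (by nlinarith)
    · exact le_max_of_le_left (by nlinarith)
  calc f x + (((ε • q) y - (ε • q) x - ε * η : ℝ) : EReal)
      = ((a + ε * t : ℝ) : EReal) := by
        rw [ha, ← EReal.coe_add]
        congr 1
        change a + (ε * q y - ε * q x - ε * η) = a + ε * t
        ring
    _ ≤ ((max a (a + t) : ℝ) : EReal) := EReal.coe_le_coe_iff.2 hcomb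
    _ = max (f x) (f x + (t : EReal)) := by
        rw [EReal.coe_strictMono.monotone.map_max, ha, EReal.coe_add]
    _ ≤ f y := max_le (hmin y) (hq y)

theorem esubdiff_max_zero_subset_of_isMin (hmin : ∀ y, f x ≤ f y) (hbot : f x ≠ ⊥) (η : ℝ) :
    esubdiff (fun z => max (f z) 0) x η ⊆ esubdiff f x η := by
  rintro q ⟨hη, htop, -, hq⟩
  have htop' : f x ≠ ⊤ := fun h => htop (by simp [h])
  obtain ⟨a, ha⟩ : ∃ a : ℝ, f x = a := ⟨(f x).toReal, (EReal.coe_toReal htop' hbot).symm⟩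
  refine ⟨hη, htop', hbot, fun y => ?_⟩
  have hy : max (f x) 0 + _ ≤ max (f y) 0 := hq y
  have hxy := hmin y
  generalize f y = b at hy hxy ⊢
  induction b using EReal.rec with
  | bot => exact absurd (le_bot_iff.1 hxy) hbot
  | top => exact le_top
  | coe b =>
    have hcoe_max : ∀ c : ℝ, max (c : EReal) 0 = ((max c 0 : ℝ) : EReal) := fun c => by
      rw [EReal.coe_strictMono.monotone.map_max, EReal.coe_zero]
    simp only [ha, hcoe_max, ← EReal.coe_add, EReal.coe_le_coe_iff] at hy hxy ⊢
    have hlip : max b 0 ≤ max a 0 + (b - a) :=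
      max_le (by linarith [le_max_left a 0]) (by linarith [le_max_right a 0])
    linarith

theorem esubdiff_zero_eq_iInter_cclo_of_isMin (hmin : ∀ y, f x ≤ f y) {g : E → EReal}
    (hg : ∀ η, esubdiff g x η ⊆ esubdiff f x η) (M : ℝ) :
    esubdiff f x 0 = ⋂ (ε : ℝ) (_ : 0 < ε), cclo (esubdiff f x ε ∪ ε • esubdiff g x (ε + M)) := by
  refine Subset.antisymm (fun p hp => mem_iInter₂.2 fun ε hε => ?_) fun p hp => ?_
  · exact subset_closure (subset_convexHull ℝ _ (Or.inl (esubdiff_mono hε.le hp)))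
  refine mem_esubdiff_zero_of_forall_pos fun δ hδ => ?_
  have hquad : Filter.Tendsto (fun ε : ℝ => ε * (ε + M)) (𝓝 0) (𝓝 0) :=
    (by fun_prop : Continuous fun ε : ℝ => ε * (ε + M)).tendsto' 0 0 (by simp)
  have hpos : ∀ᶠ ε in 𝓝[>] (0 : ℝ), 0 < ε := eventually_mem_nhdsWithin
  obtain ⟨ε, hε₀, hε₁, hεδ, hεM⟩ : ∃ ε : ℝ, 0 < ε ∧ ε ≤ 1 ∧ ε ≤ δ ∧ ε * (ε + M) ≤ δ :=
    (hpos.and (nhdsWithin_le_nhds ((eventually_le_nhds one_pos).and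
      ((eventually_le_nhds hδ).and (hquad.eventually (eventually_le_nhds hδ)))))).exists
  have hunion : esubdiff f x ε ∪ ε • esubdiff g x (ε + M) ⊆ esubdiff f x δ :=
    union_subset (esubdiff_mono hεδ) <| (smul_set_mono (hg _)).trans <|
      (smul_esubdiff_subset_of_isMin hmin hε₀.le hε₁).trans (esubdiff_mono hεM)
  exact closure_minimal (convexHull_min hunion (convex_esubdiff f x δ)) (isClosed_esubdiff f x δ)
    (mem_iInter₂.1 hp ε hε₀)

end ESubdiff

theorem statement0_general (f : X → EReal) (hf : Gamma0 f)
    (x : X) (hmin : ∀ y : X, f x ≤ f y) (M : ℝ) :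
    (esubdiff f x 0 =
      ⋂ (ε : ℝ) (_ : 0 < ε), cclo (esubdiff f x ε ∪ ε • esubdiff f x (ε + M))) ∧
    (esubdiff f x 0 =
      ⋂ (ε : ℝ) (_ : 0 < ε),
        cclo (esubdiff f x ε ∪ ε • esubdiff (fun z => max (f z) 0) x (ε + M))) :=
  ⟨esubdiff_zero_eq_iInter_cclo_of_isMin hmin (fun _ => subset_rfl) M,
    esubdiff_zero_eq_iInter_cclo_of_isMin hmin
      (esubdiff_max_zero_subset_of_isMin hmin (hf.1 x)) M⟩

/-- Lemma `lemvo`: if `f ∈ Γ₀(X)` and `x` is a global minimizer of `f`,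
then for every `M ≥ 0`,
`∂f(x) = ⋂_{ε>0} co‾(∂_ε f(x) ∪ ε·∂_{ε+M} f(x)) = ⋂_{ε>0} co‾(∂_ε f(x) ∪ ε·∂_{ε+M} f⁺(x))`. -/
theorem statement0 (f : X → EReal) (hf : Gamma0 f)
    (x : X) (hmin : ∀ y : X, f x ≤ f y) (M : ℝ) (hM : 0 ≤ M) :
    (esubdiff f x 0 =
      ⋂ (ε : ℝ) (_ : 0 < ε), cclo (esubdiff f x ε ∪ ε • esubdiff f x (ε + M))) ∧
    (esubdiff f x 0 =
      ⋂ (ε : ℝ) (_ : 0 < ε),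
        cclo (esubdiff f x ε ∪ ε • esubdiff (fun z => max (f z) 0) x (ε + M))) :=
  statement0_general f hf x hmin M
end
end

section
/- Let A, A_1, …, A_k (k ≥ 2) be nonempty subsets of X. Then [ co‾( A ∪ (A_1 ∪ ⋯ ∪ A_k) ) ]_∞ = [ co‾( A ∪ (A_1 + ⋯ + A_k) ) ]_∞, where A_1 + ⋯ + A_k is the Minkowski sum. -/
/-!
For nonempty `E`, the recession cone of `co‾ E` is the polar of the barrier cone of `E` (the
continuous functionals bounded above on `E`): a functional bounded above on `co‾ E` cannot increase
along a ray inside it, and conversely a point of a ray `e + l • y` outside `co‾ E` is separated from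
it by a functional that is bounded on `E` but increases along `y`. So the recession cone depends only
on the barrier cone, and a functional is bounded above on a Minkowski sum of nonempty sets iff it is
bounded above on each summand, i.e. iff it is bounded above on their union.
-/

open Set Pointwise Topology
open scoped Classical

noncomputable section

variable {X : Type*} [AddCommGroup X] [Module ℝ X] [TopologicalSpace X]
  [IsTopologicalAddGroup X] [ContinuousSMul ℝ X] [LocallyConvexSpace ℝ X] [T2Space X]

section OrderedGroup

variable {α ι : Type*} [AddCommGroup α] [PartialOrder α] [IsOrderedAddMonoid α]

lemma bddAbove_add_iff {s t : Set α} (hs : s.Nonempty) (ht : t.Nonempty) :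
    BddAbove (s + t) ↔ BddAbove s ∧ BddAbove t := by
  refine ⟨fun ⟨M, hM⟩ => ⟨?_, ?_⟩, fun ⟨hs', ht'⟩ => hs'.add ht'⟩
  · obtain ⟨b, hb⟩ := ht
    exact ⟨M - b, fun x hx => le_sub_iff_add_le.2 (hM (add_mem_add hx hb))⟩
  · obtain ⟨a, ha⟩ := hs
    exact ⟨M - a, fun x hx => le_sub_iff_add_le'.2 (hM (add_mem_add ha hx))⟩

lemma Set.Nonempty.finsetSum {M : Type*} [AddCommMonoid M] {t : Finset ι} {s : ι → Set M}
    (hs : ∀ i ∈ t, (s i).Nonempty) : (∑ i ∈ t, s i).Nonempty := by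
  induction t using Finset.cons_induction with
  | empty => exact ⟨0, rfl⟩
  | cons a t _ ih =>
    rw [Finset.sum_cons]
    exact (hs a (Finset.mem_cons_self a t)).add (ih fun i hi => hs i (Finset.mem_cons_of_mem hi))

lemma bddAbove_finsetSum_iff (t : Finset ι) (s : ι → Set α) (hs : ∀ i ∈ t, (s i).Nonempty) :
    BddAbove (∑ i ∈ t, s i) ↔ ∀ i ∈ t, BddAbove (s i) := by
  induction t using Finset.cons_induction with
  | empty => simp [← singleton_zero]
  | cons a t _ ih =>
    have hst : ∀ i ∈ t, (s i).Nonempty := fun i hi => hs i (Finset.mem_cons_of_mem hi)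
    rw [Finset.sum_cons, bddAbove_add_iff (hs a (Finset.mem_cons_self a t))
      (Set.Nonempty.finsetSum hst), ih hst, Finset.forall_mem_cons]

end OrderedGroup

section BarrierCone

variable {E : Type*} [AddCommGroup E] [Module ℝ E] [TopologicalSpace E]

def barrierCone (s : Set E) : Set (StrongDual ℝ E) :=
  {p | BddAbove (p '' s)}

lemma barrierCone_union (s t : Set E) :
    barrierCone (s ∪ t) = barrierCone s ∩ barrierCone t := by
  ext p
  simp only [barrierCone, mem_ofPred_eq, mem_inter_iff, image_union, bddAbove_union]

lemma barrierCone_iUnion {ι : Type*} [Finite ι] (s : ι → Set E) :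
    barrierCone (⋃ i, s i) = ⋂ i, barrierCone (s i) := by
  ext p
  rw [← biUnion_univ, ← biInter_univ]
  simp only [barrierCone, mem_ofPred_eq, mem_iInter₂, image_iUnion₂,
    finite_univ.bddAbove_biUnion]

lemma barrierCone_finsetSum {ι : Type*} (t : Finset ι) (s : ι → Set E)
    (hs : ∀ i ∈ t, (s i).Nonempty) :
    barrierCone (∑ i ∈ t, s i) = ⋂ i ∈ t, barrierCone (s i) := by
  ext p
  simp only [barrierCone, mem_ofPred_eq, mem_iInter₂, image_finsetSum p,
    bddAbove_finsetSum_iff _ _ fun i hi => (hs i hi).image p]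

lemma apply_le_of_mem_cclo {s : Set E} {p : StrongDual ℝ E} {M : ℝ} (h : ∀ x ∈ s, p x ≤ M)
    {x : E} (hx : x ∈ cclo s) : p x ≤ M :=
  closure_minimal (convexHull_min h ((convex_Iic M).linear_preimage (p : E →ₗ[ℝ] ℝ)))
    (isClosed_Iic.preimage p.continuous) hx

lemma barrierCone_cclo (s : Set E) : barrierCone (cclo s) = barrierCone s := by
  ext p
  refine ⟨fun h => h.mono (image_mono (subset_closure.trans' (subset_convexHull ℝ s))), ?_⟩
  rintro ⟨M, hM⟩
  exact ⟨M, forall_mem_image.2 fun x hx => apply_le_of_mem_cclo (fun y hy => hM ⟨y, hy, rfl⟩) hx⟩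

lemma apply_nonpos_of_mem_recCone {C : Set E} {y : E} (hy : y ∈ recCone C)
    {p : StrongDual ℝ E} (hp : p ∈ barrierCone C) : p y ≤ 0 := by
  obtain ⟨c, hc, hray⟩ := hy
  obtain ⟨M, hM⟩ := hp
  by_contra! hpy
  -- the ray `c + l • y` passes the level `M` at `l = (M - p c + 1) / p y`
  have hl : 0 ≤ (M - p c + 1) / p y := div_nonneg (by linarith [hM ⟨c, hc, rfl⟩]) hpy.le
  have hbound := hM ⟨_, hray _ hl, rfl⟩
  rw [map_add, map_smul, smul_eq_mul, div_mul_cancel₀ _ hpy.ne'] at hbound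
  linarith

variable [IsTopologicalAddGroup E] [ContinuousSMul ℝ E] [LocallyConvexSpace ℝ E]

lemma recCone_cclo {s : Set E} (hs : s.Nonempty) :
    recCone (cclo s) = {y | ∀ p ∈ barrierCone s, p y ≤ 0} := by
  ext y
  refine ⟨fun hy p hp => apply_nonpos_of_mem_recCone hy (barrierCone_cclo s ▸ hp), fun hy => ?_⟩
  obtain ⟨e, he⟩ := hs
  have heC : e ∈ cclo s := subset_closure (subset_convexHull ℝ s he)
  refine ⟨e, heC, fun l hl => ?_⟩
  by_contra hout
  obtain ⟨f, u, hfu, hux⟩ := geometric_hahn_banach_closed_point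
    (convex_convexHull ℝ s).closure isClosed_closure hout
  have hfy : f y ≤ 0 := hy f ⟨u, forall_mem_image.2 fun x hx =>
    (hfu x (subset_closure (subset_convexHull ℝ s hx))).le⟩
  have hfe : f (e + l • y) ≤ f e := by
    rw [map_add, map_smul, smul_eq_mul]
    linarith [mul_nonpos_of_nonneg_of_nonpos hl hfy]
  linarith [hfu e heC]

end BarrierCone

theorem statement1_general (k : ℕ) (A : Set X) (hA : A.Nonempty)
    (B : Fin k → Set X) (hB : ∀ i, (B i).Nonempty) :
    recCone (cclo (A ∪ ⋃ i, B i)) = recCone (cclo (A ∪ ∑ i, B i)) := by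
  rw [recCone_cclo hA.inl, recCone_cclo hA.inl, barrierCone_union, barrierCone_union,
    barrierCone_iUnion, barrierCone_finsetSum _ _ fun i _ => hB i]
  simp only [Finset.mem_univ, iInter_true]

/-- Lemma `consum-1`: for nonempty sets `A, A_1, …, A_k` (`k ≥ 2`) in `X`,
`[co‾(A ∪ (A_1 ∪ ⋯ ∪ A_k))]_∞ = [co‾(A ∪ (A_1 + ⋯ + A_k))]_∞`. -/
theorem statement1 (k : ℕ) (hk : 2 ≤ k) (A : Set X) (hA : A.Nonempty)
    (B : Fin k → Set X) (hB : ∀ i, (B i).Nonempty) :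
    recCone (cclo (A ∪ ⋃ i, B i)) = recCone (cclo (A ∪ ∑ i, B i)) :=
  statement1_general k A hA B hB
end
end

section
/- Let f ∈ Γ₀(X) and x ∈ dom f. Then for every ε ≥ 0 one has ∂_ε f⁺(x) = ⋃_{0 ≤ λ ≤ 1} ∂_{ε + λ f(x) − f⁺(x)} (λf)(x), where f⁺ := max{f, 0}, (λf)(z) := λ f(z), and 0·f is the indicator function I_{dom f} (value 0 on dom f, +∞ outside). -/
open Set Pointwise Topology
open scoped Classical

noncomputable section

variable {X : Type*} [AddCommGroup X] [Module ℝ X] [TopologicalSpace X]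
  [IsTopologicalAddGroup X] [ContinuousSMul ℝ X] [LocallyConvexSpace ℝ X] [T2Space X]

/-!
Write `g = (f ·).toReal` on `dom f` and `m = max (g x) 0`. Both inclusions reduce to real
inequalities on `dom f`: `p ∈ ∂_ε f⁺(x)` says that the affine function
`h y = m + p y - p x - ε` lies below `max g 0` on `dom f`, while membership in the `λ`-term of
the union says `h ≤ λ g` on `dom f`. Since `λ g ≤ max g 0` for `λ ∈ [0, 1]`, only the passage from
`h ≤ max g 0` to `h ≤ λ g` needs an idea: take `λ = sup ({0} ∪ {h y / g y | g y > 0})`. The upper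
bound `λ ≤ h y / g y` at points with `g y < 0` comes from convexity: combining a point with
`g > 0` and one with `g < 0` to a point where the convex combination of the values of `g`
vanishes forces `h ≤ 0` there.
-/

section Separation

variable {E : Type*} [AddCommGroup E] [Module ℝ E] {C : Set E} {g h : E → ℝ}

theorem mul_le_mul_of_convexOn_of_concaveOn (hg : ConvexOn ℝ C g) (hh : ConcaveOn ℝ C h)
    (hnonpos : ∀ z ∈ C, g z ≤ 0 → h z ≤ 0) {y₁ y₂ : E} (hy₁ : y₁ ∈ C) (hy₂ : y₂ ∈ C)
    (hg₁ : 0 < g y₁) (hg₂ : g y₂ < 0) : g y₁ * h y₂ ≤ g y₂ * h y₁ := by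
  have hd : 0 < g y₁ - g y₂ := by linarith
  set t := -g y₂ / (g y₁ - g y₂) with ht_def
  set s := g y₁ / (g y₁ - g y₂) with hs_def
  have ht : 0 ≤ t := div_nonneg (by linarith) hd.le
  have hs : 0 ≤ s := div_nonneg hg₁.le hd.le
  have hts : t + s = 1 := by
    rw [ht_def, hs_def, ← add_div, div_eq_one_iff_eq hd.ne']
    ring
  have hgz : g (t • y₁ + s • y₂) ≤ 0 :=
    calc g (t • y₁ + s • y₂) ≤ t • g y₁ + s • g y₂ := hg.2 hy₁ hy₂ ht hs hts
      _ = 0 := by rw [smul_eq_mul, smul_eq_mul, ht_def, hs_def]; field_simp; ring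
  have hcomb : t • h y₁ + s • h y₂ ≤ 0 :=
    (hh.2 hy₁ hy₂ ht hs hts).trans (hnonpos _ (hg.1 hy₁ hy₂ ht hs hts) hgz)
  have : (g y₁ * h y₂ - g y₂ * h y₁) / (g y₁ - g y₂) ≤ 0 := by
    convert hcomb using 1
    rw [smul_eq_mul, smul_eq_mul, ht_def, hs_def]
    field_simp
    ring
  linarith [(div_le_iff₀ hd).mp this]

theorem ConvexOn.exists_le_mul_of_le_max_zero (hg : ConvexOn ℝ C g) (hh : ConcaveOn ℝ C h)
    (hle : ∀ y ∈ C, h y ≤ max (g y) 0) : ∃ l ∈ Icc (0 : ℝ) 1, ∀ y ∈ C, h y ≤ l * g y := by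
  have hnonpos : ∀ y ∈ C, g y ≤ 0 → h y ≤ 0 := fun y hy hgy => by
    simpa [max_eq_right hgy] using hle y hy
  set T := insert 0 ((fun y => h y / g y) '' {y ∈ C | 0 < g y})
  have hT1 : ∀ t ∈ T, t ≤ 1 := by
    rintro t (rfl | ⟨y, ⟨hy, hgy⟩, rfl⟩)
    · exact zero_le_one
    · rw [div_le_one hgy]
      simpa [max_eq_left hgy.le] using hle y hy
  have hbdd : BddAbove T := ⟨1, hT1⟩
  refine ⟨sSup T, ⟨le_csSup hbdd (mem_insert _ _), csSup_le (insert_nonempty _ _) hT1⟩,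
    fun y hy => ?_⟩
  rcases lt_trichotomy (g y) 0 with hgy | hgy | hgy
  · have hub : ∀ t ∈ T, t ≤ h y / g y := by
      rintro t (rfl | ⟨y₁, ⟨hy₁, hg₁⟩, rfl⟩)
      · exact div_nonneg_of_nonpos (hnonpos y hy hgy.le) hgy.le
      · rw [le_div_iff_of_neg hgy, div_mul_eq_mul_div, le_div_iff₀ hg₁]
        linarith [mul_le_mul_of_convexOn_of_concaveOn hg hh hnonpos hy₁ hy hg₁ hgy]
    exact (le_div_iff_of_neg hgy).mp (csSup_le (insert_nonempty _ _) hub)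
  · simpa [hgy] using hnonpos y hy hgy.le
  · exact (div_le_iff₀ hgy).mp (le_csSup hbdd (Or.inr ⟨y, ⟨hy, hgy⟩, rfl⟩))

end Separation

theorem mul_le_max_zero {l : ℝ} (hl : l ∈ Icc (0 : ℝ) 1) (r : ℝ) : l * r ≤ max r 0 := by
  rcases le_or_gt r 0 with hr | hr
  · exact (mul_nonpos_of_nonneg_of_nonpos hl.1 hr).trans (le_max_right _ _)
  · exact (mul_le_of_le_one_left hr.le hl.2).trans (le_max_left _ _)

theorem EReal.toReal_max_zero (e : EReal) : (max e 0).toReal = max e.toReal 0 := by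
  induction e using EReal.rec with
  | bot => simp
  | top => simp
  | coe r =>
    rcases le_total r 0 with hr | hr
    · simp [hr]
    · simp [hr]

theorem EConvexOn'.convexOn_toReal {E : Type*} [AddCommGroup E] [Module ℝ E] {f : E → EReal}
    (hbot : ∀ x, f x ≠ ⊥) (hf : EConvexOn' f) : ConvexOn ℝ (edom f) (fun y => (f y).toReal) := by
  have hle : ∀ ⦃x⦄, x ∈ edom f → ∀ ⦃y⦄, y ∈ edom f → ∀ ⦃a b : ℝ⦄, 0 ≤ a → 0 ≤ b → a + b = 1 →
      f (a • x + b • y) ≤ ((a * (f x).toReal + b * (f y).toReal : ℝ) : EReal) := by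
    intro x hx y hy a b ha hb hab
    rw [EReal.coe_add, EReal.coe_mul, EReal.coe_mul, EReal.coe_toReal hx (hbot x),
      EReal.coe_toReal hy (hbot y)]
    exact hf x y a b ha hb hab
  refine ⟨fun x hx y hy a b ha hb hab => ?_, fun x hx y hy a b ha hb hab => ?_⟩
  · exact ne_top_of_le_ne_top (EReal.coe_ne_top _) (hle hx hy ha hb hab)
  · have := EReal.toReal_le_toReal (hle hx hy ha hb hab) (hbot _) (EReal.coe_ne_top _)
    rwa [EReal.toReal_coe] at this

theorem mem_esubdiff_iff {E : Type*} [AddCommGroup E] [Module ℝ E] [TopologicalSpace E]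
    {F : E → EReal} {x : E} {ε : ℝ} {p : WeakDual ℝ E} (hbot : ∀ y, F y ≠ ⊥) (hx : F x ≠ ⊤) :
    p ∈ esubdiff F x ε ↔
      0 ≤ ε ∧ ∀ y ∈ edom F, (F x).toReal + (p y - p x - ε) ≤ (F y).toReal := by
  have hcoe : ∀ {y}, F y ≠ ⊤ → F y = ((F y).toReal : EReal) :=
    fun hy => (EReal.coe_toReal hy (hbot _)).symm
  simp only [esubdiff, mem_ofPred_eq, hx, hbot x, ne_eq, not_false_eq_true, true_and, edom]
  refine and_congr_right fun _ => forall_congr' fun y => ?_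
  by_cases hy : F y = ⊤
  · simp [hy]
  · rw [hcoe hx, hcoe hy, ← EReal.coe_add, EReal.coe_le_coe_iff]
    simp

section PositivePartAndScaling

variable {α : Type*} {f : α → EReal}

theorem max_zero_ne_bot (y : α) : max (f y) 0 ≠ ⊥ :=
  ne_bot_of_le_ne_bot EReal.zero_ne_bot (le_max_right _ _)

theorem edom_max_zero : edom (fun y => max (f y) 0) = edom f := by
  ext y
  simp [edom, max_eq_top]

theorem sMul_eq_coe (hbot : ∀ y, f y ≠ ⊥) (l : ℝ) {y : α} (hy : f y ≠ ⊤) :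
    sMul l f y = ((l * (f y).toReal : ℝ) : EReal) := by
  rw [sMul, if_neg hy, EReal.coe_mul, EReal.coe_toReal hy (hbot y)]

theorem sMul_ne_bot (hbot : ∀ y, f y ≠ ⊥) (l : ℝ) (y : α) : sMul l f y ≠ ⊥ := by
  by_cases hy : f y = ⊤
  · simp [sMul, hy]
  · rw [sMul_eq_coe hbot l hy]
    exact EReal.coe_ne_bot _

theorem edom_sMul (hbot : ∀ y, f y ≠ ⊥) (l : ℝ) : edom (sMul l f) = edom f := by
  ext y
  by_cases hy : f y = ⊤
  · simp [edom, sMul, hy]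
  · simp only [edom, mem_ofPred_eq, sMul_eq_coe hbot l hy, ne_eq, EReal.coe_ne_top, hy,
      not_false_eq_true]

theorem toReal_sMul (l : ℝ) (y : α) : (sMul l f y).toReal = l * (f y).toReal := by
  by_cases hy : f y = ⊤
  · simp [sMul, hy]
  · simp [sMul, hy, EReal.toReal_mul]

end PositivePartAndScaling

/-- Lemma `hamu3l`: for `f ∈ Γ₀(X)`, `x ∈ dom f` and `ε ≥ 0`,
`∂_ε f⁺(x) = ⋃_{0 ≤ λ ≤ 1} ∂_{ε + λ f(x) − f⁺(x)} (λf)(x)`. -/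
theorem statement3 (f : X → EReal) (hf : Gamma0 f) (x : X) (hx : x ∈ edom f)
    (ε : ℝ) (hε : 0 ≤ ε) :
    esubdiff (fun z => max (f z) 0) x ε =
      ⋃ l ∈ Icc (0 : ℝ) 1,
        esubdiff (sMul l f) x (ε + l * (f x).toReal - max (f x).toReal 0) := by
  obtain ⟨hbot, -, hconv, -⟩ := hf
  have hg := hconv.convexOn_toReal hbot
  have hmax_x : max (f x) 0 ≠ ⊤ := by rwa [← edom_max_zero] at hx
  have hsMul_x (l : ℝ) : sMul l f x ≠ ⊤ := by rwa [← edom_sMul hbot l] at hx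
  ext p
  simp only [mem_iUnion, exists_prop, mem_esubdiff_iff (max_zero_ne_bot (f := f)) hmax_x,
    mem_esubdiff_iff (sMul_ne_bot hbot _) (hsMul_x _), edom_max_zero, edom_sMul hbot,
    EReal.toReal_max_zero, toReal_sMul]
  set m := max (f x).toReal 0
  constructor
  · rintro ⟨-, hle⟩
    have hh : ConcaveOn ℝ (edom f) (fun y => m - ε - p x + p y) :=
      (concaveOn_const _ hg.1).add ((p : X →ₗ[ℝ] ℝ).concaveOn hg.1)
    obtain ⟨l, hl, hlg⟩ := hg.exists_le_mul_of_le_max_zero hh fun y hy => by linarith [hle y hy]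
    exact ⟨l, hl, by linarith [hlg x hx], fun y hy => by linarith [hlg y hy]⟩
  · rintro ⟨l, hl, -, hle⟩
    exact ⟨hε, fun y hy => by linarith [hle y hy, mul_le_max_zero hl (f y).toReal]⟩
end
end

section
/- Let {f_t : t ∈ T} be a nonempty family of proper convex functions from X to ℝ∪{+∞} (not necessarily lower semicontinuous), let f := sup_{t∈T} f_t, and let x ∈ dom f. Under the standard hypothesis (SH) one has ℝ₊(dom f − x) = ⋂_{t∈T} ℝ₊(dom f_t − x), where ℝ₊ A := {λ a : λ ≥ 0, a ∈ A}. -/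
open Set Pointwise Topology
open scoped Classical

noncomputable section

variable {X : Type*} [AddCommGroup X] [Module ℝ X] [TopologicalSpace X]
  [IsTopologicalAddGroup X] [ContinuousSMul ℝ X] [LocallyConvexSpace ℝ X] [T2Space X]

/-- The cone `ℝ₊(A − x)`. -/
def coneGen (A : Set X) (x : X) : Set X :=
  {z | ∃ l : ℝ, 0 ≤ l ∧ ∃ a ∈ A, z = l • (a - x)}

lemma edom_iSup_subset {T E : Type*} (f : T → E → EReal) (t : T) :
    edom (fun z => ⨆ t, f t z) ⊆ edom (f t) :=
  fun _ hz h => hz (top_le_iff.1 (h ▸ le_iSup (fun t => f t _) t))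

section

variable {E : Type*} [AddCommGroup E] [Module ℝ E]

lemma EConvexOn'.le_of_le_of_le {g : E → EReal} (hg : EConvexOn' g) {x y : E} {a b m : ℝ}
    (ha : 0 ≤ a) (hb : 0 ≤ b) (hab : a + b = 1) (hx : g x ≤ m) (hy : g y ≤ m) :
    g (a • x + b • y) ≤ m :=
  calc g (a • x + b • y) ≤ a * g x + b * g y := hg x y a b ha hb hab
    _ ≤ a * m + b * m := by gcongr
    _ = m := by rw [← EReal.coe_mul, ← EReal.coe_mul, ← EReal.coe_add, ← add_mul, hab, one_mul]

lemma EConvexOn'.le_of_le_of_le_add_smul {g : E → EReal} (hg : EConvexOn' g) {x z : E}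
    {s s' m : ℝ} (hs' : 0 ≤ s') (hs's : s' ≤ s) (hx : g x ≤ m) (hxz : g (x + s • z) ≤ m) :
    g (x + s' • z) ≤ m := by
  have hs : 0 ≤ s := hs'.trans hs's
  have hsegment : x + s' • z = (s' / s) • (x + s • z) + (1 - s' / s) • x := by
    rw [smul_add, smul_smul, div_mul_cancel_of_imp fun h => le_antisymm (h ▸ hs's) hs', sub_smul,
      one_smul]
    abel
  rw [hsegment]
  exact hg.le_of_le_of_le (div_nonneg hs' hs) (sub_nonneg.2 (div_le_one_of_le₀ hs's hs))
    (add_sub_cancel _ _) hxz hx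

lemma mem_coneGen_iff {A : Set E} {x z : E} (hx : x ∈ A) :
    z ∈ coneGen A x ↔ ∃ s : ℝ, 0 < s ∧ x + s • z ∈ A := by
  constructor
  · rintro ⟨l, hl, a, ha, rfl⟩
    rcases hl.eq_or_lt with rfl | hl
    · exact ⟨1, one_pos, by simpa using hx⟩
    · exact ⟨l⁻¹, inv_pos.2 hl, by rwa [smul_smul, inv_mul_cancel₀ hl.ne', one_smul, add_sub_cancel]⟩
  · rintro ⟨s, hs, hxz⟩
    exact ⟨s⁻¹, (inv_pos.2 hs).le, x + s • z, hxz, by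
      rw [add_sub_cancel_left, smul_smul, inv_mul_cancel₀ hs.ne', one_smul]⟩

lemma coneGen_mono {A B : Set E} (hAB : A ⊆ B) (x : E) : coneGen A x ⊆ coneGen B x :=
  fun _ ⟨l, hl, a, ha, hz⟩ => ⟨l, hl, a, hAB ha, hz⟩

/-- Each `t` has a step `s t` along `z` into `dom f_t`; by upper semicontinuity the bound at that
step persists near `t`, compactness leaves finitely many steps, and convexity carries the bounds
back to the smallest of them. -/
lemma exists_pos_forall_add_smul_le {T : Type*} [TopologicalSpace T] [CompactSpace T]
    {f : T → E → EReal} (hconv : ∀ t, EConvexOn' (f t))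
    (husc : ∀ z, UpperSemicontinuous fun t => f t z) {x z : E} {M : ℝ} (hx : ∀ t, f t x ≤ M)
    (hz : ∀ t, ∃ s : ℝ, 0 < s ∧ x + s • z ∈ edom (f t)) :
    ∃ s : ℝ, 0 < s ∧ ∃ m : ℝ, ∀ t, f t (x + s • z) ≤ m := by
  choose s hs hsz using hz
  choose r hr using fun t => (EReal.exists_between_coe_real (lt_top_iff_ne_top.2 (hsz t))).imp
    fun _ h => h.1
  obtain ⟨I, hI⟩ := isCompact_univ.elim_finite_subcover
    (fun i => (fun t => f t (x + s i • z)) ⁻¹' Iio (r i : EReal))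
    (fun i => (husc _).isOpen_preimage _) fun t _ => mem_iUnion.2 ⟨t, hr t⟩
  obtain ⟨s₀, hs₀, hs₀I⟩ : ∃ s₀ : ℝ, 0 < s₀ ∧ ∀ i ∈ I, s₀ ≤ s i :=
    ((eventually_mem_nhdsWithin (a := (0 : ℝ))).and <| I.eventually_all.2 fun i _ =>
      Filter.eventually_of_mem (Ioo_mem_nhdsGT (hs i)) fun _ h => h.2.le).exists
  obtain ⟨m, hMm, hI_m⟩ : ∃ m : ℝ, M ≤ m ∧ ∀ i ∈ I, r i ≤ m :=
    ((Filter.eventually_ge_atTop M).and <| I.eventually_all.2 fun i _ =>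
      Filter.eventually_ge_atTop (r i)).exists
  refine ⟨s₀, hs₀, m, fun t => ?_⟩
  obtain ⟨i, hi, hti⟩ := mem_iUnion₂.1 (hI (mem_univ t))
  exact (hconv t).le_of_le_of_le_add_smul hs₀.le (hs₀I i hi) ((hx t).trans (by exact_mod_cast hMm))
    ((le_of_lt hti).trans (by exact_mod_cast hI_m i hi))

end

theorem statement5_general {T : Type*} [TopologicalSpace T] [CompactSpace T]
    (f : T → X → EReal)
    (hconv : ∀ t, EConvexOn' (f t))
    (husc : ∀ z : X, UpperSemicontinuous fun t => f t z)
    (x : X) (hx : x ∈ edom (fun z => ⨆ t, f t z)) :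
    coneGen (edom (fun z => ⨆ t, f t z)) x = ⋂ t, coneGen (edom (f t)) x := by
  refine (subset_iInter fun t => coneGen_mono (edom_iSup_subset f t) x).antisymm fun z hz => ?_
  have hz : ∀ t, ∃ s : ℝ, 0 < s ∧ x + s • z ∈ edom (f t) :=
    fun t => (mem_coneGen_iff (edom_iSup_subset f t hx)).1 (mem_iInter.1 hz t)
  obtain ⟨M, hM, -⟩ := EReal.exists_between_coe_real (lt_top_iff_ne_top.2 hx)
  obtain ⟨s, hs, m, hm⟩ := exists_pos_forall_add_smul_le hconv husc
    (fun t => (le_iSup (fun t => f t x) t).trans hM.le) hz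
  exact (mem_coneGen_iff hx).2 ⟨s, hs, ne_top_of_le_ne_top (EReal.coe_ne_top m) (iSup_le hm)⟩

/-- under (SH), for a nonempty family of proper convex functions
(not necessarily lsc) and `x ∈ dom f`, `ℝ₊(dom f − x) = ⋂_t ℝ₊(dom f_t − x)`. -/
theorem statement5 {T : Type*} [TopologicalSpace T] [CompactSpace T] [T2Space T] [Nonempty T]
    (f : T → X → EReal)
    (hproper : ∀ t, (∀ z, f t z ≠ ⊥) ∧ (∃ z, f t z ≠ ⊤))
    (hconv : ∀ t, EConvexOn' (f t))
    (husc : ∀ z : X, UpperSemicontinuous fun t => f t z)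
    (x : X) (hx : x ∈ edom (fun z => ⨆ t, f t z)) :
    coneGen (edom (fun z => ⨆ t, f t z)) x = ⋂ t, coneGen (edom (f t)) x :=
  statement5_general f hconv husc x hx
end
end

section
/- Let {f_t : t ∈ T} ⊂ Γ₀(X) be a nonempty family, f := sup_{t∈T} f_t, and x ∈ dom f. Let 0 < ε_t ≤ 1, t ∈ T, be such that inf_{t∈T} ε_t f_t(x) > −∞, and assume the standard hypothesis (SH) holds. Then for every ε > 0: N_{dom f}(x) = [ co‾( ⋃_{t∈T} ∂_ε(ε_t f_t)(x) ) ]_∞, where (ε_t f_t)(z) := ε_t f_t(z). -/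
open Set Pointwise Topology
open scoped Classical

/-!
A weak*-closed convex set `C ⊆ X*` is the intersection of the weak*-closed half-spaces containing
it, and the weak*-continuous functionals on `X*` are the evaluations at points of `X`. Hence `p`
lies in the recession cone of `C` iff `p z ≤ 0` for every `z` along which `C` is bounded above.
It remains to compare these `z` with the directions from `x` into `dom f`.

If `y ∈ dom f`, every `ε`-subgradient `q` of `ε_t f_t` at `x` satisfies
`q (y - x) ≤ max (f y) 0 - inf_t ε_t f_t(x) + ε`, uniformly in `t`, so `z = y - x` is such a
direction. Conversely, if the `ε`-subgradients are bounded above along `z`, then each `f_t` is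
finite at some `x + λ_t z` with `λ_t > 0`: otherwise a segment of arbitrarily steep slope starting
`ε` below `(x, ε_t f_t(x))` misses the epigraph, and separating the two produces an
`ε`-subgradient that is large at `z`. By upper semicontinuity in `t` and compactness of `T`,
finitely many `λ_t` suffice, and convexity bounds `f` at `x + (min λ_t) z`.
-/

lemma nonpos_of_forall_add_mul_le {a b M : ℝ} (h : ∀ l : ℝ, 0 ≤ l → a + l * b ≤ M) :
    b ≤ 0 := by
  by_contra! hb
  have := h ((M - a + 1) / b) (div_nonneg (by linarith [h 0 le_rfl]) hb.le)
  rw [div_mul_cancel₀ _ hb.ne'] at this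
  linarith

lemma EReal.continuous_coe_mul {l : ℝ} (hl : l ≠ 0) :
    Continuous fun a : EReal => (l : EReal) * a :=
  continuous_iff_continuousAt.2 fun _ =>
    (EReal.continuousAt_mul (.inl (EReal.coe_ne_zero.2 hl)) (.inl (EReal.coe_ne_zero.2 hl))
      (.inl (EReal.coe_ne_bot l)) (.inl (EReal.coe_ne_top l))).comp
      (continuous_const.prodMk continuous_id).continuousAt

section WeakStar

variable {X : Type*} [AddCommGroup X] [Module ℝ X] [TopologicalSpace X]

instance : LocallyConvexSpace ℝ (WeakDual ℝ X) :=
  WeakBilin.locallyConvexSpace (B := topDualPairing ℝ X)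

lemma mem_recCone_iff_of_isClosed {C : Set (WeakDual ℝ X)} (hC : IsClosed C)
    (hconv : Convex ℝ C) (hne : C.Nonempty) {p : WeakDual ℝ X} :
    p ∈ recCone C ↔ ∀ (z : X) (u : ℝ), (∀ q ∈ C, q z ≤ u) → p z ≤ 0 := by
  constructor
  · rintro ⟨c, -, hc⟩ z u hu
    exact nonpos_of_forall_add_mul_le fun l hl => hu _ (hc l hl)
  · intro hp
    obtain ⟨c, hc⟩ := hne
    refine ⟨c, hc, fun l hl => ?_⟩
    by_contra hout
    obtain ⟨Φ, u, hCu, huΦ⟩ := geometric_hahn_banach_closed_point hconv hC hout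
    obtain ⟨z, rfl⟩ := LinearMap.dualEmbedding_surjective (topDualPairing ℝ X) Φ
    change ∀ q ∈ C, q z < u at hCu
    change u < c z + l * p z at huΦ
    have hpz := hp z u fun q hq => (hCu q hq).le
    nlinarith [hCu c hc]

lemma cclo_subset_setOf_apply_le {S : Set (WeakDual ℝ X)} {w : X} {a : ℝ}
    (h : ∀ q ∈ S, q w ≤ a) : cclo S ⊆ {q | q w ≤ a} :=
  closure_minimal (convexHull_min h (convex_halfSpace_le ⟨fun _ _ => rfl, fun _ _ => rfl⟩ a))
    (isClosed_le (WeakDual.eval_continuous w) continuous_const)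

end WeakStar

section ScalarMultiple

variable {X : Type*}

lemma sMul_eq_mul {l : ℝ} (hl : 0 < l) (f : X → EReal) :
    sMul l f = fun z => (l : EReal) * f z := by
  funext z
  by_cases h : f z = ⊤ <;> simp [sMul, h, EReal.coe_mul_top_of_pos hl]

lemma sMul_ne_top_iff {l : ℝ} (hl : 0 < l) {f : X → EReal} {y : X} :
    sMul l f y ≠ ⊤ ↔ f y ≠ ⊤ := by
  by_cases h : f y = ⊤ <;> simp [sMul, h, EReal.mul_ne_top, hl.le]

lemma sMul_le_max_zero {l : ℝ} (hl : 0 < l) (hl1 : l ≤ 1) (f : X → EReal) (y : X) :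
    sMul l f y ≤ max (f y) 0 := by
  rw [sMul_eq_mul hl]
  rcases le_total 0 (f y) with h | h
  · exact (mul_le_of_le_one_left h (by exact_mod_cast hl1)).trans (le_max_left _ _)
  · exact (mul_nonpos_of_nonneg_of_nonpos (by exact_mod_cast hl.le) h).trans (le_max_right _ _)

lemma Gamma0.sMul [AddCommGroup X] [Module ℝ X] [TopologicalSpace X] {f : X → EReal}
    (hf : Gamma0 f) {l : ℝ} (hl : 0 < l) : Gamma0 (sMul l f) := by
  obtain ⟨hbot, ⟨x₀, hx₀⟩, hconv, hlsc⟩ := hf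
  have hl' : (0 : EReal) ≤ l := by exact_mod_cast hl.le
  rw [sMul_eq_mul hl]
  refine ⟨fun y => ?_, ⟨x₀, ?_⟩, fun y y' a b ha hb hab => ?_, ?_⟩
  · simp [EReal.mul_ne_bot, hbot y, hl.le]
  · simp [EReal.mul_ne_top, hx₀, hl.le]
  · calc (l : EReal) * f (a • y + b • y')
        ≤ (l : EReal) * ((a : EReal) * f y + (b : EReal) * f y') := by
          gcongr
          exact hconv y y' a b ha hb hab
      _ = (a : EReal) * ((l : EReal) * f y) + (b : EReal) * ((l : EReal) * f y') := by
          rw [EReal.left_distrib_of_nonneg_of_ne_top hl' (EReal.coe_ne_top l),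
            mul_left_comm, mul_left_comm (l : EReal)]
  · exact (EReal.continuous_coe_mul hl.ne').comp_lowerSemicontinuous hlsc
      fun a b hab => mul_le_mul_of_nonneg_left hab hl'

end ScalarMultiple

lemma EConvexOn'.apply_add_smul_le_max {X : Type*} [AddCommGroup X] [Module ℝ X]
    {f : X → EReal} (hf : EConvexOn' f) (x z : X) {l L : ℝ} (hl : 0 ≤ l) (hlL : l ≤ L)
    (hL : 0 < L) : f (x + l • z) ≤ max (f x) (f (x + L • z)) := by
  set b := l / L
  set M := max (f x) (f (x + L • z))
  have hb0 : (0 : EReal) ≤ b := by exact_mod_cast div_nonneg hl hL.le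
  have hb1 : (0 : EReal) ≤ ((1 - b : ℝ) : EReal) := by
    exact_mod_cast sub_nonneg.2 ((div_le_one hL).2 hlL)
  have hcomb : (1 - b) • x + b • (x + L • z) = x + l • z := by
    rw [smul_add, smul_smul, div_mul_cancel₀ l hL.ne']
    module
  calc f (x + l • z) ≤ ((1 - b : ℝ) : EReal) * f x + (b : EReal) * f (x + L • z) :=
        hcomb ▸ hf _ _ _ _ (EReal.coe_nonneg.1 hb1) (EReal.coe_nonneg.1 hb0) (by ring)
    _ ≤ ((1 - b : ℝ) : EReal) * M + (b : EReal) * M := by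
        gcongr
        exacts [le_max_left _ _, le_max_right _ _]
    _ = M := by
        rw [← EReal.right_distrib_of_nonneg hb1 hb0, ← EReal.coe_add, sub_add_cancel,
          EReal.coe_one, one_mul]

section Epigraph

variable {X : Type*}

def epigraph (g : X → EReal) : Set (X × ℝ) := {p | g p.1 ≤ p.2}

lemma isClosed_epigraph [TopologicalSpace X] {g : X → EReal} (hg : LowerSemicontinuous g) :
    IsClosed (epigraph g) :=
  hg.isClosed_epigraph.preimage
    (continuous_fst.prodMk (continuous_coe_real_ereal.comp continuous_snd))

lemma convex_epigraph [AddCommGroup X] [Module ℝ X] {g : X → EReal} (hg : EConvexOn' g) :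
    Convex ℝ (epigraph g) := by
  rintro ⟨y, s⟩ hys ⟨y', s'⟩ hys' a b ha hb hab
  calc g (a • y + b • y') ≤ (a : EReal) * g y + (b : EReal) * g y' := hg y y' a b ha hb hab
    _ ≤ (a : EReal) * s + (b : EReal) * s' := by
        gcongr
        exacts [hys, hys']
    _ = ((a • (y, s) + b • (y', s')).2 : ℝ) := by simp

end Epigraph

section EpsilonSubdifferential

variable {X : Type*} [AddCommGroup X] [Module ℝ X] [TopologicalSpace X]

lemma apply_sub_le_of_mem_esubdiff {g : X → EReal} {x y : X} {ε m M : ℝ} {q : WeakDual ℝ X}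
    (hq : q ∈ esubdiff g x ε) (hm : (m : EReal) ≤ g x) (hM : g y ≤ M) :
    q y - q x ≤ M - m + ε := by
  have h : ((m + (q y - q x - ε) : ℝ) : EReal) ≤ M :=
    calc ((m + (q y - q x - ε) : ℝ) : EReal) = m + ((q y - q x - ε : ℝ) : EReal) := rfl
      _ ≤ g x + ((q y - q x - ε : ℝ) : EReal) := by gcongr
      _ ≤ g y := hq.2.2.2 y
      _ ≤ M := hM
  linarith [EReal.coe_le_coe_iff.1 h]

variable [IsTopologicalAddGroup X] [ContinuousSMul ℝ X] [LocallyConvexSpace ℝ X]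

lemma exists_affine_strictly_between {K E : Set (X × ℝ)} (hKc : Convex ℝ K) (hK : IsCompact K)
    (hEc : Convex ℝ E) (hE : IsClosed E) (hKE : Disjoint K E) {x : X} {r s : ℝ}
    (hr : (x, r) ∈ K) (hs : (x, s) ∈ E) (hrs : r < s) :
    ∃ (q : X →L[ℝ] ℝ) (c : ℝ),
      (∀ p ∈ K, p.2 < c + q p.1) ∧ ∀ p ∈ E, c + q p.1 < p.2 := by
  obtain ⟨Φ, u, v, hΦK, huv, hΦE⟩ := geometric_hahn_banach_compact_closed hKc hK hEc hE hKE
  set κ := Φ (0, 1)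
  have hΦ : ∀ p : X × ℝ, Φ p = Φ (p.1, 0) + p.2 * κ := fun p => by
    rw [← smul_eq_mul, ← map_smul, ← map_add, Prod.smul_mk, smul_zero, smul_eq_mul, mul_one,
      Prod.mk_add_mk, add_zero, zero_add]
  -- the vertical pair `(x, r)`, `(x, s)` forces the `ℝ`-component `κ` of `Φ` to be positive
  have hκ : 0 < κ := by
    have h1 := hΦK _ hr
    have h2 := hΦE _ hs
    rw [hΦ] at h1 h2
    nlinarith
  refine ⟨-κ⁻¹ • Φ.comp (ContinuousLinearMap.inl ℝ X ℝ), v / κ,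
    fun p hp => ?_, fun p hp => ?_⟩
  all_goals
    simp only [smul_apply, ContinuousLinearMap.comp_apply, ContinuousLinearMap.inl_apply,
      smul_eq_mul]
    rw [← sub_pos]
    field_simp
  · nlinarith [hΦ p ▸ hΦK p hp]
  · nlinarith [hΦ p ▸ hΦE p hp]

lemma exists_mem_esubdiff_lt_apply {g : X → EReal} (hg : Gamma0 g) {x : X} (hx : g x ≠ ⊤)
    {ε : ℝ} (hε : 0 < ε) (z : X) (γ : ℝ)
    (hray : ∀ l ∈ Icc (0 : ℝ) 1,
      (((g x).toReal - ε + γ * l : ℝ) : EReal) < g (x + l • z)) :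
    ∃ q ∈ esubdiff g x ε, γ - ε < q z := by
  obtain ⟨hbot, -, hconv, hlsc⟩ := hg
  set r := (g x).toReal
  have hgx : g x = r := (EReal.coe_toReal hx (hbot x)).symm
  have hseg : segment ℝ (x, r - ε) (x + z, r - ε + γ) =
      (fun l : ℝ => (x + l • z, r - ε + γ * l)) '' Icc 0 1 := by
    rw [segment_eq_image']
    refine image_congr fun l _ => ?_
    ext <;> simp [mul_comm]
  have hdisj : Disjoint (segment ℝ (x, r - ε) (x + z, r - ε + γ)) (epigraph g) := by
    rw [hseg, Set.disjoint_left]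
    rintro _ ⟨l, hl, rfl⟩ hmem
    exact (hray l hl).not_ge hmem
  obtain ⟨q, c, hqK, hqE⟩ := exists_affine_strictly_between (convex_segment _ _)
    (hseg ▸ isCompact_Icc.image (by fun_prop)) (convex_epigraph hconv) (isClosed_epigraph hlsc)
    hdisj (left_mem_segment ℝ _ _) (show (x, r) ∈ epigraph g from hgx.le) (sub_lt_self r hε)
  have hleft := hqK _ (left_mem_segment ℝ _ _)
  have hright := hqK _ (right_mem_segment ℝ _ _)
  have hxE := hqE (x, r) hgx.le
  simp only [map_add] at hleft hright hxE
  refine ⟨q, ⟨hε.le, hx, hbot x, fun y => ?_⟩, show γ - ε < q z by linarith⟩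
  by_cases hy : g y = ⊤
  · simp [hy]
  have hyE : c + q y < (g y).toReal := hqE (y, (g y).toReal) (EReal.le_coe_toReal hy)
  rw [hgx, ← EReal.coe_add, ← EReal.coe_toReal hy (hbot y), EReal.coe_le_coe_iff]
  change r + (q y - q x - ε) ≤ (g y).toReal
  linarith

lemma esubdiff_nonempty {g : X → EReal} (hg : Gamma0 g) {x : X} (hx : g x ≠ ⊤) {ε : ℝ}
    (hε : 0 < ε) : (esubdiff g x ε).Nonempty := by
  obtain ⟨q, hq, -⟩ := exists_mem_esubdiff_lt_apply hg hx hε 0 0 fun l _ => by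
    rw [smul_zero, add_zero, zero_mul, add_zero, ← EReal.coe_toReal hx (hg.1 x)]
    exact_mod_cast sub_lt_self _ hε
  exact ⟨q, hq⟩

lemma exists_pos_add_smul_ne_top {g : X → EReal} (hg : Gamma0 g) {x : X} (hx : g x ≠ ⊤)
    {ε : ℝ} (hε : 0 < ε) {z : X} {u : ℝ} (hu : ∀ q ∈ esubdiff g x ε, q z ≤ u) :
    ∃ l : ℝ, 0 < l ∧ g (x + l • z) ≠ ⊤ := by
  by_contra! htop
  obtain ⟨q, hq, hqz⟩ := exists_mem_esubdiff_lt_apply hg hx hε z (u + ε) fun l hl => by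
    rcases hl.1.eq_or_lt with rfl | hl0
    · rw [zero_smul, add_zero, mul_zero, add_zero, ← EReal.coe_toReal hx (hg.1 x)]
      exact_mod_cast sub_lt_self _ hε
    · rw [htop l hl0]
      exact EReal.coe_lt_top _
  linarith [hu q hq]

end EpsilonSubdifferential

lemma exists_pos_add_smul_mem_edom_iSup {X : Type*} [AddCommGroup X] [Module ℝ X]
    {T : Type*} [TopologicalSpace T] [CompactSpace T] [Nonempty T] (f : T → X → EReal)
    (hconv : ∀ t, EConvexOn' (f t)) (husc : ∀ z : X, UpperSemicontinuous fun t => f t z)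
    {x z : X} (hx : x ∈ edom (fun y => ⨆ t, f t y))
    (hray : ∀ t, ∃ l : ℝ, 0 < l ∧ f t (x + l • z) ≠ ⊤) :
    ∃ l : ℝ, 0 < l ∧ x + l • z ∈ edom (fun y => ⨆ t, f t y) := by
  choose L hL hLtop using hray
  choose N hN using fun t => EReal.exists_between_coe_real (lt_top_iff_ne_top.2 (hLtop t))
  obtain ⟨s, hs⟩ := CompactSpace.elim_nhds_subcover (fun t => {t' | f t' (x + L t • z) < N t})
    fun t => husc _ t _ (hN t).1
  have hcover : ∀ t', ∃ i ∈ s, f t' (x + L i • z) < N i := fun t' => by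
    simpa using hs.ge (mem_univ t')
  obtain ⟨i₀, -, hmin⟩ := s.exists_min_image L
    (let ⟨i, hi, _⟩ := hcover (Classical.arbitrary T); ⟨i, hi⟩)
  set M : EReal := s.sup fun i => (N i : EReal)
  have hbound : ∀ t', f t' (x + L i₀ • z) ≤ max (⨆ t, f t x) M := fun t' => by
    obtain ⟨i, hi, hti⟩ := hcover t'
    calc f t' (x + L i₀ • z) ≤ max (f t' x) (f t' (x + L i • z)) :=
          (hconv t').apply_add_smul_le_max x z (hL i₀).le (hmin i hi) (hL i)
      _ ≤ max (⨆ t, f t x) M := max_le_max (le_iSup (fun t => f t x) t')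
          (hti.le.trans (Finset.le_sup (f := fun i => (N i : EReal)) hi))
  have hM : M < ⊤ := (Finset.sup_lt_iff bot_lt_top).2 fun i _ => EReal.coe_lt_top _
  exact ⟨L i₀, hL i₀, ((iSup_le hbound).trans_lt (max_lt (lt_top_iff_ne_top.2 hx) hM)).ne⟩

lemma apply_sub_le_of_mem_iUnion_esubdiff {X : Type*} [AddCommGroup X] [Module ℝ X]
    [TopologicalSpace X] {T : Type*} {f : T → X → EReal} {et : T → ℝ}
    (het : ∀ t, 0 < et t ∧ et t ≤ 1) {x y : X} {m ε : ℝ}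
    (hm : ∀ t, (m : EReal) ≤ sMul (et t) (f t) x) (hy : y ∈ edom (fun z => ⨆ t, f t z)) :
    ∀ q ∈ ⋃ t, esubdiff (sMul (et t) (f t)) x ε,
      q (y - x) ≤ (max (⨆ t, f t y) 0).toReal - m + ε := by
  intro q hq
  obtain ⟨t, hqt⟩ := mem_iUnion.1 hq
  have hM : sMul (et t) (f t) y ≤ ((max (⨆ t, f t y) 0).toReal : EReal) := by
    rw [EReal.coe_toReal (max_lt (lt_top_iff_ne_top.2 hy) EReal.zero_lt_top).ne
      (ne_bot_of_le_ne_bot EReal.zero_ne_bot (le_max_right _ _))]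
    exact (sMul_le_max_zero (het t).1 (het t).2 (f t) y).trans
      (max_le_max_right _ (le_iSup (fun t => f t y) t))
  rw [map_sub]
  exact apply_sub_le_of_mem_esubdiff hqt (hm t) hM

variable {X : Type*} [AddCommGroup X] [Module ℝ X] [TopologicalSpace X]
  [IsTopologicalAddGroup X] [ContinuousSMul ℝ X] [LocallyConvexSpace ℝ X] [T2Space X]

theorem statement7_general {T : Type*} [TopologicalSpace T] [CompactSpace T] [Nonempty T]
    (f : T → X → EReal) (hf : ∀ t, Gamma0 (f t))
    (husc : ∀ z : X, UpperSemicontinuous fun t => f t z)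
    (x : X) (hx : x ∈ edom (fun z => ⨆ t, f t z))
    (et : T → ℝ) (het : ∀ t, 0 < et t ∧ et t ≤ 1)
    (hinf : (⊥ : EReal) < ⨅ t, sMul (et t) (f t) x)
    (ε : ℝ) (hε : 0 < ε) :
    normalCone (edom (fun z => ⨆ t, f t z)) x =
      recCone (cclo (⋃ t, esubdiff (sMul (et t) (f t)) x ε)) := by
  have hg t : Gamma0 (sMul (et t) (f t)) := (hf t).sMul (het t).1
  have hgx t : sMul (et t) (f t) x ≠ ⊤ :=
    (sMul_ne_top_iff (het t).1).2 (ne_top_of_le_ne_top hx (le_iSup (fun t => f t x) t))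
  have hsub t :
      esubdiff (sMul (et t) (f t)) x ε ⊆ cclo (⋃ t, esubdiff (sMul (et t) (f t)) x ε) :=
    (subset_iUnion (fun t => esubdiff (sMul (et t) (f t)) x ε) t).trans
      ((subset_convexHull ℝ _).trans subset_closure)
  obtain ⟨t₀⟩ := ‹Nonempty T›
  ext p
  rw [mem_recCone_iff_of_isClosed (C := cclo _) isClosed_closure (convex_convexHull ℝ _).closure
    ((esubdiff_nonempty (hg t₀) (hgx t₀) hε).mono (hsub t₀))]
  constructor
  · rintro ⟨-, hp⟩ z u hu
    have hray t : ∃ l : ℝ, 0 < l ∧ f t (x + l • z) ≠ ⊤ := by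
      obtain ⟨l, hl, hgl⟩ :=
        exists_pos_add_smul_ne_top (hg t) (hgx t) hε fun q hq => hu q (hsub t hq)
      exact ⟨l, hl, (sMul_ne_top_iff (het t).1).1 hgl⟩
    obtain ⟨l, hl, hdom⟩ :=
      exists_pos_add_smul_mem_edom_iSup f (fun t => (hf t).2.2.1) husc hx hray
    have hlp := hp _ hdom
    rw [map_add, map_smul, smul_eq_mul, add_sub_cancel_left] at hlp
    exact nonpos_of_mul_nonpos_right hlp hl
  · intro hp
    refine ⟨hx, fun y hy => ?_⟩
    obtain ⟨m, -, hm⟩ := EReal.exists_between_coe_real hinf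
    simpa using hp (y - x) _ fun q hq => cclo_subset_setOf_apply_le
      (apply_sub_le_of_mem_iUnion_esubdiff het (fun t => hm.le.trans (iInf_le _ t)) hy) hq

/-- Theorem `p1`, equality under (SH): for `{f_t} ⊂ Γ₀(X)`, `f = sup_t f_t`,
`x ∈ dom f`, weights `0 < ε_t ≤ 1` with `inf_t ε_t f_t(x) > −∞`, and every `ε > 0`,
`N_{dom f}(x) = [co‾(⋃_t ∂_ε(ε_t f_t)(x))]_∞`. -/
theorem statement7 {T : Type*} [TopologicalSpace T] [CompactSpace T] [T2Space T] [Nonempty T]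
    (f : T → X → EReal) (hf : ∀ t, Gamma0 (f t))
    (husc : ∀ z : X, UpperSemicontinuous fun t => f t z)
    (x : X) (hx : x ∈ edom (fun z => ⨆ t, f t z))
    (et : T → ℝ) (het : ∀ t, 0 < et t ∧ et t ≤ 1)
    (hinf : (⊥ : EReal) < ⨅ t, sMul (et t) (f t) x)
    (ε : ℝ) (hε : 0 < ε) :
    normalCone (edom (fun z => ⨆ t, f t z)) x =
      recCone (cclo (⋃ t, esubdiff (sMul (et t) (f t)) x ε)) :=
  statement7_general f hf husc x hx et het hinf ε hε
end

section
/- Let {f_t : t ∈ T} ⊂ Γ₀(X) be a nonempty family, f := sup_{t∈T} f_t, and x ∈ dom f with inf_{t∈T} f_t(x) > −∞. Under the standard hypothesis (SH), for every ε > 0 one has N_{dom f}(x) = [ co‾( ⋃_{t∈T} ∂_ε f_t(x) ) ]_∞. -/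
open Set Pointwise Topology
open scoped Classical

noncomputable section

variable {X : Type*} [AddCommGroup X] [Module ℝ X] [TopologicalSpace X]
  [IsTopologicalAddGroup X] [ContinuousSMul ℝ X] [LocallyConvexSpace ℝ X] [T2Space X]

/-!
If `p ∈ N_{dom f}(x)` and `⟨p, z⟩ > 0`, the open ray `x + ℝ₊ z` misses `dom f`. By (SH) and
compactness of `T`, at each point of the ray some `f t` is `+∞`; the set of such `t` is closed
and, by convexity, shrinks as the point approaches `x`, so a single `f t` is `+∞` on the whole
ray. Separating the segment from `(x, f t x - ε)` to `(x + z, f t x + N)` from the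
epigraph of `f t` then gives `q ∈ ∂_ε f_t(x)` with `⟨q, z⟩ > N`. Hence the closed convex hull `C`
of the `ε`-subdifferentials is unbounded above in every direction `z` with `⟨p, z⟩ > 0`; as the
weak*-continuous functionals on `X*` are evaluations, `C + ℝ₊ p ⊆ C`.

Conversely every `q ∈ ∂_ε f_t(x)` satisfies `⟨q, y - x⟩ ≤ f y - inf_t f_t(x) + ε` for
`y ∈ dom f`, a family of closed half-spaces which therefore contains `C`; a ray `c + ℝ₊ p` inside
them forces `⟨p, y - x⟩ ≤ 0`.
-/

instance WeakDual.instLocallyConvexSpace {E : Type*} [AddCommGroup E] [Module ℝ E]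
    [TopologicalSpace E] : LocallyConvexSpace ℝ (WeakDual ℝ E) :=
  WeakBilin.locallyConvexSpace

def realEpigraph {E : Type*} (g : E → EReal) : Set (E × ℝ) := {w | g w.1 ≤ w.2}

theorem LowerSemicontinuous.isClosed_realEpigraph {E : Type*} [TopologicalSpace E]
    {g : E → EReal} (hg : LowerSemicontinuous g) : IsClosed (realEpigraph g) :=
  hg.isClosed_epigraph.preimage
    (continuous_fst.prodMk (continuous_coe_real_ereal.comp continuous_snd))

theorem UpperSemicontinuous.exists_eq_top_of_iSup_eq_top {T : Type*} [TopologicalSpace T]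
    [CompactSpace T] [Nonempty T] {g : T → EReal} (hg : UpperSemicontinuous g)
    (h : ⨆ t, g t = ⊤) : ∃ t, g t = ⊤ := by
  obtain ⟨t, -, ht⟩ := (hg.upperSemicontinuousOn univ).exists_isMaxOn univ_nonempty isCompact_univ
  exact ⟨t, top_le_iff.1 (h ▸ iSup_le fun s => ht (mem_univ s))⟩

section

variable {E : Type*} [AddCommGroup E] [Module ℝ E]

theorem EConvexOn'.convex_realEpigraph {g : E → EReal} (hg : EConvexOn' g) :
    Convex ℝ (realEpigraph g) := by
  rintro ⟨w₁, r₁⟩ h₁ ⟨w₂, r₂⟩ h₂ a b ha hb hab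
  have ha' : (0 : EReal) ≤ a := by exact_mod_cast ha
  have hb' : (0 : EReal) ≤ b := by exact_mod_cast hb
  calc g (a • w₁ + b • w₂) ≤ (a : EReal) * g w₁ + (b : EReal) * g w₂ := hg w₁ w₂ a b ha hb hab
    _ ≤ (a : EReal) * r₁ + (b : EReal) * r₂ :=
      add_le_add (mul_le_mul_of_nonneg_left h₁ ha') (mul_le_mul_of_nonneg_left h₂ hb')
    _ = ((a • (w₁, r₁) + b • (w₂, r₂)).2 : ℝ) := by simp

theorem EConvexOn'.eq_top_of_eq_top_of_le {g : E → EReal} (hg : EConvexOn' g) {x z : E}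
    (hx : g x ≠ ⊤) {η η' : ℝ} (hη : 0 < η) (hηη' : η ≤ η') (h : g (x + η • z) = ⊤) :
    g (x + η' • z) = ⊤ := by
  by_contra h'
  have hη' : 0 < η' := hη.trans_le hηη'
  set a := η / η'
  have ha : 0 ≤ a := (div_pos hη hη').le
  have ha₁ : a ≤ 1 := (div_le_one hη').2 hηη'
  have hcomb : (1 - a) • x + a • (x + η' • z) = x + η • z := by
    rw [smul_add, smul_smul, div_mul_cancel₀ _ hη'.ne']
    module
  have hfin (c : ℝ) (hc : 0 ≤ c) {v : EReal} (hv : v ≠ ⊤) : (c : EReal) * v ≠ ⊤ :=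
    (EReal.mul_ne_top _ _).2 ⟨.inl (EReal.coe_ne_bot c), .inl (by exact_mod_cast hc),
      .inl (EReal.coe_ne_top c), .inr hv⟩
  have hle := hg x (x + η' • z) (1 - a) a (by linarith) ha (by ring)
  rw [hcomb, h, top_le_iff] at hle
  exact (EReal.add_lt_top (hfin _ (by linarith) hx) (hfin _ ha h')).ne hle

theorem exists_forall_eq_top_of_forall_exists_eq_top {T : Type*} [TopologicalSpace T]
    [CompactSpace T] {f : T → E → EReal} (hconv : ∀ t, EConvexOn' (f t))
    (husc : ∀ z, UpperSemicontinuous fun t => f t z) {x z : E} (hx : ∀ t, f t x ≠ ⊤)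
    (h : ∀ η : ℝ, 0 < η → ∃ t, f t (x + η • z) = ⊤) :
    ∃ t, ∀ η : ℝ, 0 < η → f t (x + η • z) = ⊤ := by
  set K : Ioi (0 : ℝ) → Set T := fun η => {t | f t (x + (η : ℝ) • z) = ⊤}
  have hmono {η η' : Ioi (0 : ℝ)} (hle : (η : ℝ) ≤ η') : K η ⊆ K η' := fun t ht =>
    (hconv t).eq_top_of_eq_top_of_le (hx t) η.2 hle ht
  have hclosed (η : Ioi (0 : ℝ)) : IsClosed (K η) := by
    have : K η = ((fun t => f t (x + (η : ℝ) • z)) ⁻¹' Iio ⊤)ᶜ := by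
      ext t; simp [K, lt_top_iff_ne_top]
    exact this ▸ ((husc _).isOpen_preimage ⊤).isClosed_compl
  have hdir : Directed (· ⊇ ·) K := fun η η' =>
    ⟨⟨min η η', mem_Ioi.2 (lt_min η.2 η'.2)⟩, hmono (min_le_left _ _),
      hmono (min_le_right _ _)⟩
  have : Nonempty (Ioi (0 : ℝ)) := ⟨⟨1, mem_Ioi.2 one_pos⟩⟩
  obtain ⟨t, ht⟩ := IsCompact.nonempty_iInter_of_directed_nonempty_isCompact_isClosed K hdir
    (fun η => h η η.2) (fun η => (hclosed η).isCompact) hclosed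
  exact ⟨t, fun η hη => mem_iInter.1 ht ⟨η, hη⟩⟩

variable [TopologicalSpace E]

theorem WeakDual.exists_eq_eval (Φ : WeakDual ℝ E →L[ℝ] ℝ) :
    ∃ z : E, ∀ q : WeakDual ℝ E, Φ q = q z := by
  obtain ⟨z, rfl⟩ := LinearMap.dualEmbedding_surjective (topDualPairing ℝ E) Φ
  exact ⟨z, fun _ => rfl⟩

theorem mem_recCone_of_forall_exists_lt {C : Set (WeakDual ℝ E)} (hC : IsClosed C)
    (hCv : Convex ℝ C) (hne : C.Nonempty) {p : WeakDual ℝ E}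
    (h : ∀ z : E, 0 < p z → ∀ N : ℝ, ∃ q ∈ C, N < q z) : p ∈ recCone C := by
  obtain ⟨c, hc⟩ := hne
  refine ⟨c, hc, fun l hl => ?_⟩
  by_contra hcl
  obtain ⟨Φ, u, hCu, hu⟩ := geometric_hahn_banach_closed_point hCv hC hcl
  obtain ⟨z, hz⟩ := WeakDual.exists_eq_eval Φ
  simp only [hz] at hCu hu
  have hcz := hCu c hc
  have hpz : 0 < p z := by
    by_contra! hpz
    have : (c + l • p) z = c z + l * p z := rfl
    nlinarith [mul_nonpos_of_nonneg_of_nonpos hl hpz]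
  obtain ⟨q, hq, hqz⟩ := h z hpz u
  exact (hCu q hq).not_gt hqz

theorem add_smul_notMem_of_mem_normalCone {A : Set E} {x : E} {p : WeakDual ℝ E}
    (hp : p ∈ normalCone A x) {z : E} (hz : 0 < p z) {η : ℝ} (hη : 0 < η) :
    x + η • z ∉ A := fun h => by
  have := hp.2 _ h
  rw [map_add, map_smul, smul_eq_mul] at this
  nlinarith

theorem mem_normalCone_of_mem_recCone {A : Set E} {x : E} (hx : x ∈ A)
    {C : Set (WeakDual ℝ E)} {b : E → ℝ} (hC : ∀ q ∈ C, ∀ y ∈ A, q y - q x ≤ b y)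
    {p : WeakDual ℝ E} (hp : p ∈ recCone C) : p ∈ normalCone A x := by
  obtain ⟨c, hc, hray⟩ := hp
  refine ⟨hx, fun y hy => ?_⟩
  by_contra! hpos
  obtain ⟨n, hn⟩ := exists_nat_gt ((b y - (c y - c x)) / (p y - p x))
  rw [div_lt_iff₀ hpos] at hn
  have hle := hC _ (hray n n.cast_nonneg) y hy
  have : (c + (n : ℝ) • p) y - (c + (n : ℝ) • p) x = c y - c x + n * (p y - p x) := by
    change c y + n * p y - (c x + n * p x) = _
    ring
  linarith

theorem forall_sub_le_of_mem_cclo {S : Set (WeakDual ℝ E)} {A : Set E} {x : E} {b : E → ℝ}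
    (hS : ∀ q ∈ S, ∀ y ∈ A, q y - q x ≤ b y) : ∀ q ∈ cclo S, ∀ y ∈ A, q y - q x ≤ b y := by
  set H := {q : WeakDual ℝ E | ∀ y ∈ A, q y - q x ≤ b y}
  have hclosed : IsClosed H := by
    simp only [H, ofPred_forall]
    exact isClosed_biInter fun y _ => isClosed_le
      ((WeakDual.eval_continuous y).sub (WeakDual.eval_continuous x)) continuous_const
  have hconv : Convex ℝ H := by
    simp only [H, ofPred_forall]
    refine convex_iInter₂ fun y _ => convex_halfSpace_le ⟨fun q₁ q₂ => ?_, fun c q => ?_⟩ _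
    · change q₁ y + q₂ y - (q₁ x + q₂ x) = _
      ring
    · change c * q y - c * q x = c * (q y - q x)
      ring
  exact closure_minimal (convexHull_min hS hconv) hclosed

theorem mem_esubdiff_of_forall_le {g : E → EReal} {x : E} {a ε : ℝ} {q : WeakDual ℝ E}
    (hgx : g x = a) (hε : 0 ≤ ε)
    (h : ∀ y (r : ℝ), g y ≤ r → q y - q x - ε ≤ r - a) : q ∈ esubdiff g x ε := by
  refine ⟨hε, hgx ▸ EReal.coe_ne_top a, hgx ▸ EReal.coe_ne_bot a, fun y => ?_⟩
  rw [hgx]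
  induction hy : g y using EReal.rec with
  | bot =>
    have := h y (q y - q x - ε + a - 1) (by simp [hy])
    linarith
  | coe b => exact_mod_cast (by linarith [h y b hy.le] : a + (q y - q x - ε) ≤ b)
  | top => exact le_top

theorem sub_le_of_mem_esubdiff {g G : E → EReal} {x y : E} {m ε : ℝ} {q : WeakDual ℝ E}
    (hq : q ∈ esubdiff g x ε) (hm : m ≤ g x) (hgG : g y ≤ G y) (hG : G y ≠ ⊤) :
    q y - q x ≤ (G y).toReal - m + ε := by
  have h : ((m + (q y - q x - ε) : ℝ) : EReal) ≤ G y :=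
    calc ((m + (q y - q x - ε) : ℝ) : EReal) = m + ((q y - q x - ε : ℝ) : EReal) :=
          EReal.coe_add _ _
      _ ≤ g x + ((q y - q x - ε : ℝ) : EReal) := add_le_add_left hm _
      _ ≤ g y := hq.2.2.2 y
      _ ≤ G y := hgG
  have := EReal.toReal_le_toReal h (EReal.coe_ne_bot _) hG
  rw [EReal.toReal_coe] at this
  linarith

variable [IsTopologicalAddGroup E] [ContinuousSMul ℝ E] [LocallyConvexSpace ℝ E]

/-- The separating hyperplane is not vertical, since it passes between `(x, g x - ε) ∈ K` and
`(x, g x)` in the epigraph; its slope is the `ε`-subgradient. -/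
theorem exists_mem_esubdiff_of_disjoint_realEpigraph {g : E → EReal} (hconv : EConvexOn' g)
    (hlsc : LowerSemicontinuous g) {x : E} {a ε : ℝ} (hgx : g x = a) (hε : 0 < ε)
    {K : Set (E × ℝ)} (hK : Convex ℝ K) (hKc : IsCompact K) (hxK : (x, a - ε) ∈ K)
    (hdisj : Disjoint K (realEpigraph g)) :
    ∃ q ∈ esubdiff g x ε, ∀ w ∈ K, w.2 - a < q w.1 - q x := by
  obtain ⟨Φ, u, v, hK_lt, huv, hE_gt⟩ := geometric_hahn_banach_compact_closed hK hKc
    hconv.convex_realEpigraph hlsc.isClosed_realEpigraph hdisj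
  set φ : E →L[ℝ] ℝ := Φ.comp (ContinuousLinearMap.inl ℝ E ℝ)
  set α := Φ (0, 1)
  have hΦ (w : E) (r : ℝ) : Φ (w, r) = φ w + r * α := by
    rw [← smul_eq_mul, ← map_smul, ContinuousLinearMap.comp_apply, ← map_add]
    simp
  have hxa : u < φ x + a * α := hΦ x a ▸ huv.trans (hE_gt (x, a) (by simp [realEpigraph, hgx]))
  have hα : 0 < α := by
    have := hΦ x (a - ε) ▸ hK_lt _ hxK
    nlinarith
  set q : WeakDual ℝ E := StrongDual.toWeakDual (-α⁻¹ • φ)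
  have hq (y : E) : q y - q x = (φ x - φ y) / α := by
    simp only [q, StrongDual.toWeakDual_apply, smul_apply, smul_eq_mul]
    ring
  refine ⟨q, mem_esubdiff_of_forall_le hgx hε.le fun y r hy => ?_, fun w hw => ?_⟩
  · have hy := hΦ y r ▸ hE_gt (y, r) hy
    have hx := hΦ x (a - ε) ▸ hK_lt _ hxK
    have : (φ x - φ y) / α < r - a + ε := by rw [div_lt_iff₀ hα]; linarith
    linarith [hq y]
  · have hw := hΦ w.1 w.2 ▸ hK_lt w hw
    rw [hq, lt_div_iff₀ hα]
    linarith

theorem esubdiff_nonempty_s9 {g : E → EReal} (hconv : EConvexOn' g) (hlsc : LowerSemicontinuous g)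
    {x : E} {a ε : ℝ} (hgx : g x = a) (hε : 0 < ε) : (esubdiff g x ε).Nonempty := by
  have hdisj : Disjoint {((x, a - ε) : E × ℝ)} (realEpigraph g) := by
    simp only [disjoint_singleton_left, realEpigraph, mem_ofPred_eq, hgx, not_le]
    exact_mod_cast sub_lt_self a hε
  obtain ⟨q, hq, -⟩ := exists_mem_esubdiff_of_disjoint_realEpigraph hconv hlsc hgx hε
    (convex_singleton _) isCompact_singleton rfl hdisj
  exact ⟨q, hq⟩

theorem exists_mem_esubdiff_lt_apply_s9 {g : E → EReal} (hconv : EConvexOn' g)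
    (hlsc : LowerSemicontinuous g) {x : E} {a ε : ℝ} (hgx : g x = a) (hε : 0 < ε) {z : E}
    (hz : ∀ η : ℝ, 0 < η → g (x + η • z) = ⊤) (N : ℝ) :
    ∃ q ∈ esubdiff g x ε, N < q z := by
  set P : E × ℝ := (x, a - ε)
  set Q : E × ℝ := (x + z, a + N)
  have hdisj : Disjoint (segment ℝ P Q) (realEpigraph g) := by
    rw [segment_eq_image', Set.disjoint_left]
    rintro _ ⟨θ, hθ, rfl⟩ hθE
    simp only [realEpigraph, mem_ofPred_eq, P, Q, Prod.fst_add, Prod.snd_add, Prod.fst_sub,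
      Prod.snd_sub, Prod.smul_fst, Prod.smul_snd, add_sub_cancel_left] at hθE
    rcases hθ.1.eq_or_lt with rfl | hθ₀
    · simp only [zero_smul, add_zero, hgx] at hθE
      exact absurd (EReal.coe_le_coe_iff.1 hθE) (by linarith)
    · rw [hz θ hθ₀, top_le_iff] at hθE
      exact EReal.coe_ne_top _ hθE
  have hcompact : IsCompact (segment ℝ P Q) := by
    rw [segment_eq_image']
    exact isCompact_Icc.image (by fun_prop)
  obtain ⟨q, hq, hK⟩ := exists_mem_esubdiff_of_disjoint_realEpigraph hconv hlsc hgx hε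
    (convex_segment P Q) hcompact (left_mem_segment ℝ P Q) hdisj
  refine ⟨q, hq, ?_⟩
  have := hK Q (right_mem_segment ℝ P Q)
  simp only [Q, map_add] at this
  linarith

end

theorem statement9_general {T : Type*} [TopologicalSpace T] [CompactSpace T] [Nonempty T]
    (f : T → X → EReal) (hf : ∀ t, Gamma0 (f t))
    (husc : ∀ z : X, UpperSemicontinuous fun t => f t z)
    (x : X) (hx : x ∈ edom (fun z => ⨆ t, f t z))
    (hinf : (⊥ : EReal) < ⨅ t, f t x)
    (ε : ℝ) (hε : 0 < ε) :
    normalCone (edom (fun z => ⨆ t, f t z)) x =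
      recCone (cclo (⋃ t, esubdiff (f t) x ε)) := by
  have hfx (t : T) : f t x = (f t x).toReal :=
    (EReal.coe_toReal (fun h => hx (top_le_iff.1 (h ▸ le_iSup (f · x) t))) ((hf t).1 x)).symm
  have hsub (t : T) : esubdiff (f t) x ε ⊆ cclo (⋃ t, esubdiff (f t) x ε) :=
    (subset_iUnion (fun t => esubdiff (f t) x ε) t).trans
      ((subset_convexHull ℝ _).trans subset_closure)
  ext p
  constructor
  · intro hp
    obtain ⟨t₀⟩ := ‹Nonempty T›
    refine mem_recCone_of_forall_exists_lt isClosed_closure (convex_convexHull ℝ _).closure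
      ((esubdiff_nonempty_s9 (hf t₀).2.2.1 (hf t₀).2.2.2 (hfx t₀) hε).mono (hsub t₀))
      fun z hz N => ?_
    have hray (η : ℝ) (hη : 0 < η) : ∃ t, f t (x + η • z) = ⊤ :=
      (husc _).exists_eq_top_of_iSup_eq_top
        (not_not.1 (add_smul_notMem_of_mem_normalCone hp hz hη))
    obtain ⟨t, ht⟩ := exists_forall_eq_top_of_forall_exists_eq_top (fun t => (hf t).2.2.1)
      husc (fun t => (hfx t).trans_ne (EReal.coe_ne_top _)) hray
    obtain ⟨q, hq, hqz⟩ := exists_mem_esubdiff_lt_apply_s9 (hf t).2.2.1 (hf t).2.2.2 (hfx t) hε ht N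
    exact ⟨q, hsub t hq, hqz⟩
  · intro hp
    set m := (⨅ t, f t x).toReal
    have hm (t : T) : (m : EReal) ≤ f t x := by
      rw [EReal.coe_toReal ((iInf_le _ t).trans_lt ((hfx t).trans_lt (EReal.coe_lt_top _))).ne
        hinf.ne']
      exact iInf_le _ t
    refine mem_normalCone_of_mem_recCone hx
      (forall_sub_le_of_mem_cclo (b := fun y => (⨆ t, f t y).toReal - m + ε) ?_) hp
    rintro q hq y hy
    obtain ⟨t, hq⟩ := mem_iUnion.1 hq
    exact sub_le_of_mem_esubdiff (G := fun z => ⨆ t, f t z) hq (hm t) (le_iSup (f · y) t) hy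

/-- Corollary `ccor`: under (SH), if `inf_t f_t(x) > −∞` then for every
`ε > 0`, `N_{dom f}(x) = [co‾(⋃_t ∂_ε f_t(x))]_∞`. -/
theorem statement9 {T : Type*} [TopologicalSpace T] [CompactSpace T] [T2Space T] [Nonempty T]
    (f : T → X → EReal) (hf : ∀ t, Gamma0 (f t))
    (husc : ∀ z : X, UpperSemicontinuous fun t => f t z)
    (x : X) (hx : x ∈ edom (fun z => ⨆ t, f t z))
    (hinf : (⊥ : EReal) < ⨅ t, f t x)
    (ε : ℝ) (hε : 0 < ε) :
    normalCone (edom (fun z => ⨆ t, f t z)) x =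
      recCone (cclo (⋃ t, esubdiff (f t) x ε)) :=
  statement9_general f hf husc x hx hinf ε hε
end
end
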